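/- As k → ∞, the essential infima converge: ess inf_{u ∈ 𝕌_{−k,0}} E[ℓ_0(u) | 𝒴_{−k,0}] → ess inf_{u ∈ 𝕌_0} E[ℓ_0(u) | 𝒴_{−∞,0}] almost surely and in L¹(P). -/

import Mathlib

open MeasureTheory Filter Set
open scoped ENNReal Topology symmDiff

noncomputable section

namespace ErgodicDecisions

variable {Ω U : Type*}

/-- The `ℤ`-indexed iterates of an invertible transformation `T` with inverse `S`:
`iter T S n = Tⁿ` for `n ≥ 0` and `iter T S (-n) = Sⁿ`. -/
def iter (T S : Ω → Ω) : ℤ → Ω → Ω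
  | Int.ofNat n => T^[n]
  | Int.negSucc n => S^[n + 1]

variable {m0 : MeasurableSpace Ω} [mU : MeasurableSpace U]

/-- The observation σ-field `𝒴_{m,n} = ⋁_{k=m}^{n} T^{-k} 𝒴`. -/
def obsField (T S : Ω → Ω) (Y : MeasurableSpace Ω) (m n : ℤ) : MeasurableSpace Ω :=
  ⨆ k ∈ Set.Icc m n, MeasurableSpace.comap (iter T S k) Y

/-- The observation σ-field `𝒴_{-∞,n} = ⋁_{k ≤ n} T^{-k} 𝒴`. -/
def obsFieldLE (T S : Ω → Ω) (Y : MeasurableSpace Ω) (n : ℤ) : MeasurableSpace Ω :=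
  ⨆ k ∈ Set.Iic n, MeasurableSpace.comap (iter T S k) Y

/-- `𝕌_{m,n}`: the set of `𝒴_{m,n}`-measurable decision maps `Ω → U`. -/
def Umn (T S : Ω → Ω) (Y : MeasurableSpace Ω) (m n : ℤ) : Set (Ω → U) :=
  {v | Measurable[obsField T S Y m n] v}

/-- `𝕌_n = ⋃_{m ≤ n} 𝕌_{m,n}`. -/
def Un (T S : Ω → Ω) (Y : MeasurableSpace Ω) (n : ℤ) : Set (Ω → U) :=
  ⋃ m ∈ Set.Iic n, Umn T S Y m n

/-- The loss at time `n` of the decision map `v`: `ℓ_n(v)(ω) = ℓ(v(ω), Tⁿω)`. -/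
def lossAt (T S : Ω → Ω) (ℓ : U → Ω → ℝ) (n : ℤ) (v : Ω → U) (ω : Ω) : ℝ :=
  ℓ (v ω) (iter T S n ω)

/-- An admissible strategy: `u_k` is `𝒴_{0,k}`-measurable for every `k ≥ 1`. -/
def Admissible (T S : Ω → Ω) (Y : MeasurableSpace Ω) (u : ℕ → Ω → U) : Prop :=
  ∀ k : ℕ, 1 ≤ k → u k ∈ Umn T S Y 0 (k : ℤ)

/-- The time-average loss `L_T(u) = T⁻¹ ∑_{k=1}^T ℓ_k(u_k)`. -/
def avgLoss (T S : Ω → Ω) (ℓ : U → Ω → ℝ) (u : ℕ → Ω → U) (n : ℕ) (ω : Ω) : ℝ :=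
  (n : ℝ)⁻¹ * ∑ k ∈ Finset.Icc 1 n, lossAt T S ℓ (k : ℤ) (u k) ω

/-- `g` is an essential infimum (an a.e.-greatest lower bound among random variables)
of the family `(f i)_{i ∈ S₀}` under `P`. -/
def IsEssInfFam {ι : Type*} (P : Measure Ω) (S₀ : Set ι) (f : ι → Ω → ℝ) (g : Ω → ℝ) : Prop :=
  Measurable[m0] g ∧ (∀ i ∈ S₀, ∀ᵐ ω ∂P, g ω ≤ f i ω) ∧
    ∀ h : Ω → ℝ, Measurable[m0] h → (∀ i ∈ S₀, ∀ᵐ ω ∂P, h ω ≤ f i ω) → ∀ᵐ ω ∂P, h ω ≤ g ω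

/-- `g` is an essential supremum (an a.e.-least upper bound among random variables)
of the family `(f i)_{i ∈ S₀}` under `P`. -/
def IsEssSupFam {ι : Type*} (P : Measure Ω) (S₀ : Set ι) (f : ι → Ω → ℝ) (g : Ω → ℝ) : Prop :=
  Measurable[m0] g ∧ (∀ i ∈ S₀, ∀ᵐ ω ∂P, f i ω ≤ g ω) ∧
    ∀ h : Ω → ℝ, Measurable[m0] h → (∀ i ∈ S₀, ∀ᵐ ω ∂P, f i ω ≤ h ω) → ∀ᵐ ω ∂P, g ω ≤ h ω

/-- A mean-optimal strategy in the sense of Lemma 2.5 of the paper: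
`E[ℓ_k(ũ_k)|𝒴_{0,k}] ≤ ess inf_{u ∈ 𝕌_{0,k}} E[ℓ_k(u)|𝒴_{0,k}] + 1/k` a.s. for all `k ≥ 1`. -/
def MeanOptimalStrategy (P : Measure Ω) (T S : Ω → Ω) (Y : MeasurableSpace Ω)
    (ℓ : U → Ω → ℝ) (ut : ℕ → Ω → U) : Prop :=
  Admissible T S Y ut ∧
    ∀ k : ℕ, 1 ≤ k → ∃ g : Ω → ℝ,
      IsEssInfFam P (Umn T S Y 0 (k : ℤ))
        (fun v => P[lossAt T S ℓ (k : ℤ) v | obsField T S Y 0 (k : ℤ)]) g ∧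
      ∀ᵐ ω ∂P, (P[lossAt T S ℓ (k : ℤ) (ut k) | obsField T S Y 0 (k : ℤ)]) ω ≤ g ω + (k : ℝ)⁻¹

/-- Pathwise optimality (Definition 2.2). -/
def PathwiseOptimal (P : Measure Ω) (T S : Ω → Ω) (Y : MeasurableSpace Ω)
    (ℓ : U → Ω → ℝ) (us : ℕ → Ω → U) : Prop :=
  Admissible T S Y us ∧
    ∀ u : ℕ → Ω → U, Admissible T S Y u →
      ∀ᵐ ω ∂P,
        0 ≤ Filter.liminf (fun n : ℕ => avgLoss T S ℓ u n ω - avgLoss T S ℓ us n ω) atTop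

/-- Weak pathwise optimality (Definition 2.3). -/
def WeaklyPathwiseOptimal (P : Measure Ω) (T S : Ω → Ω) (Y : MeasurableSpace Ω)
    (ℓ : U → Ω → ℝ) (us : ℕ → Ω → U) : Prop :=
  Admissible T S Y us ∧
    ∀ u : ℕ → Ω → U, Admissible T S Y u → ∀ ε : ℝ, 0 < ε →
      Tendsto (fun n : ℕ => P {ω | -ε ≤ avgLoss T S ℓ u n ω - avgLoss T S ℓ us n ω})
        atTop (𝓝 1)

/-- Mean optimality (Definition 2.4). -/
def MeanOptimal (P : Measure Ω) (T S : Ω → Ω) (Y : MeasurableSpace Ω)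
    (ℓ : U → Ω → ℝ) (us : ℕ → Ω → U) : Prop :=
  Admissible T S Y us ∧
    ∀ u : ℕ → Ω → U, Admissible T S Y u →
      0 ≤ Filter.liminf
        (fun n : ℕ => (∫ ω, avgLoss T S ℓ u n ω ∂P) - ∫ ω, avgLoss T S ℓ us n ω ∂P) atTop

/-- Two σ-fields on `Ω` agree modulo `P`-null sets. -/
def EqModP (P : Measure Ω) (m₁ m₂ : MeasurableSpace Ω) : Prop :=
  (∀ A : Set Ω, MeasurableSet[m₁] A → ∃ B : Set Ω, MeasurableSet[m₂] B ∧ P (A ∆ B) = 0) ∧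
    ∀ A : Set Ω, MeasurableSet[m₂] A → ∃ B : Set Ω, MeasurableSet[m₁] B ∧ P (A ∆ B) = 0

/-- Conditional K-automorphism relative to `Z` (Definition 1.4); `S` is the inverse of `T`,
so that `T^{-k}𝒳 = comap T^k 𝒳` and `T^{k}𝒳 = comap S^k 𝒳`. -/
def CondK (P : Measure Ω) (T S : Ω → Ω) (Z : MeasurableSpace Ω) : Prop :=
  ∃ X : MeasurableSpace Ω, X ≤ m0 ∧
    X ≤ MeasurableSpace.comap T X ∧
    EqModP P (⨆ k : ℕ, MeasurableSpace.comap (T^[k + 1]) X) m0 ∧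
    EqModP P (⨅ k : ℕ, Z ⊔ MeasurableSpace.comap (S^[k + 1]) X) Z

/-- Conditional weak mixing relative to `Z` (Definition 1.3); `S` is the inverse of `T`,
so that `T^k B = (S^[k])⁻¹ B`. -/
def CondWeakMixing (P : Measure Ω) (S : Ω → Ω) (Z : MeasurableSpace Ω) : Prop :=
  ∀ A B : Set Ω, MeasurableSet[m0] A → MeasurableSet[m0] B →
    Tendsto
      (fun n : ℕ => ∫ ω,
        (n : ℝ)⁻¹ * ∑ k ∈ Finset.Icc 1 n,
          |(P[(A ∩ S^[k] ⁻¹' B).indicator (fun _ => (1 : ℝ)) | Z]) ω -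
            (P[A.indicator (fun _ => (1 : ℝ)) | Z]) ω *
              (P[(S^[k] ⁻¹' B).indicator (fun _ => (1 : ℝ)) | Z]) ω| ∂P)
      atTop (𝓝 0)

/-- The tail σ-field `⋂_{k≥1} (𝒴_{-∞,0} ∨ T^k 𝒳)`. -/
def tailField (T S : Ω → Ω) (Y X : MeasurableSpace Ω) : MeasurableSpace Ω :=
  ⨅ k : ℕ, obsFieldLE T S Y 0 ⊔ MeasurableSpace.comap (S^[k + 1]) X

/-- The truncated loss `ℓ_0(v)·1_{Λ ≤ M}`. -/
def truncLoss (ℓ : U → Ω → ℝ) (Λ : Ω → ℝ) (M : ℝ) (v : Ω → U) (ω : Ω) : ℝ :=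
  if Λ ω ≤ M then ℓ (v ω) ω else 0

/-- `ℓ̄_0^M(v) = ℓ_0(v)·1_{Λ≤M} − E[ℓ_0(v)·1_{Λ≤M} | 𝒴_{-∞,0}]`. -/
def barLoss (P : Measure Ω) (T S : Ω → Ω) (Y : MeasurableSpace Ω)
    (ℓ : U → Ω → ℝ) (Λ : Ω → ℝ) (M : ℝ) (v : Ω → U) (ω : Ω) : ℝ :=
  truncLoss ℓ Λ M v ω - (P[truncLoss ℓ Λ M v | obsFieldLE T S Y 0]) ω

/-- The uniform conditional mixing assumption of Theorem 2.12:
`lim_{M→∞} limsup_{T→∞} E[(1/T)∑_{k=1}^T ess sup_{u,u'∈𝕌₀}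
|E[(ℓ̄₀^M(u)∘T^{-k})·ℓ̄₀^M(u')|𝒴_{-∞,0}]|] = 0`. -/
def UniformCondMixing (P : Measure Ω) (T S : Ω → Ω) (Y : MeasurableSpace Ω)
    (ℓ : U → Ω → ℝ) (Λ : Ω → ℝ) : Prop :=
  ∃ G : ℝ → ℕ → Ω → ℝ,
    (∀ (M : ℝ) (k : ℕ),
      IsEssSupFam P ((Un T S Y 0) ×ˢ (Un T S Y 0))
        (fun p ω =>
          |(P[(fun ω' => barLoss P T S Y ℓ Λ M p.1 (S^[k] ω') *
                barLoss P T S Y ℓ Λ M p.2 ω') | obsFieldLE T S Y 0]) ω|)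
        (G M k)) ∧
    Tendsto
      (fun M : ℝ =>
        Filter.limsup
          (fun n : ℕ => ∫ ω, (n : ℝ)⁻¹ * ∑ k ∈ Finset.Icc 1 n, G M k ω ∂P) atTop)
      atTop (𝓝 0)

/-- Equimeasurability of the loss (Definition 3.1): for every `ε > 0` there is a set of
probability at least `1-ε` on which the family `{ℓ(u,·) : u ∈ U}` is totally bounded
in `L^∞(P)`. -/
def Equimeasurable (P : Measure Ω) (ℓ : U → Ω → ℝ) : Prop :=
  ∀ ε : ℝ, 0 < ε → ∃ Ωε : Set Ω, MeasurableSet[m0] Ωε ∧ 1 - ENNReal.ofReal ε ≤ P Ωε ∧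
    ∀ δ : ℝ, 0 < δ → ∃ 𝒩 : Finset (Ω → ℝ), ∀ u : U, ∃ f ∈ 𝒩,
      eLpNorm (fun ω => Ωε.indicator (ℓ u) ω - f ω) ⊤ P ≤ ENNReal.ofReal δ

end ErgodicDecisions

/-! Among the conditional losses `E[ℓ₀(u) | 𝒴_{-k,0}]`, `u ∈ 𝕌_{-k,0}`, an essential infimum exists
because `∫ arctan` is bounded and strictly monotone: a minimising sequence of countable subfamilies
yields a countable subfamily whose pointwise infimum cannot be lowered by any further member.
As `k` grows, the σ-fields and the decision sets both increase, so by the tower property these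
essential infima form a supermartingale, dominated by the uniformly integrable martingale
`E[Λ | 𝒴_{-k,0}]`; it therefore converges a.s. and in `L¹`. Lévy's upward theorem identifies the
limit with the essential infimum over `𝕌₀` given `𝒴_{-∞,0}`: it lies below every
`E[ℓ₀(u) | 𝒴_{-∞,0}]`, and conditioning that essential infimum on `𝒴_{-k,0}` stays below the
`k`-th one. -/

namespace ErgodicDecisions

variable {Ω ι : Type*}

section General

variable {m m' m0 : MeasurableSpace Ω} {P : Measure Ω}

section EssInf

theorem _root_.Real.abs_arctan_le (x : ℝ) : |Real.arctan x| ≤ Real.pi / 2 :=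
  abs_le.2 ⟨(Real.arctan_mem_Ioo x).1.le, (Real.arctan_mem_Ioo x).2.le⟩

lemma IsEssInfFam.abs_ae_le {A : Set ι} {f : ι → Ω → ℝ} {g H : Ω → ℝ}
    (hg : IsEssInfFam P A f g) (hA : A.Nonempty) (hH : Measurable H)
    (hfH : ∀ i ∈ A, |f i| ≤ᵐ[P] H) : |g| ≤ᵐ[P] H := by
  obtain ⟨i₀, hi₀⟩ := hA
  have hlower : ∀ᵐ ω ∂P, -H ω ≤ g ω :=
    hg.2.2 _ hH.neg fun i hi => (hfH i hi).mono fun ω hω => neg_le_of_abs_le hω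
  filter_upwards [hlower, hg.2.1 i₀ hi₀, hfH i₀ hi₀] with ω h₁ h₂ h₃
  exact abs_le.2 ⟨h₁, h₂.trans (le_of_abs_le h₃)⟩

variable [IsFiniteMeasure P]

lemma integrable_arctan_comp {q : Ω → ℝ} (hq : AEMeasurable q P) :
    Integrable (fun ω => Real.arctan (q ω)) P :=
  .of_bound (Real.continuous_arctan.measurable.comp_aemeasurable hq).aestronglyMeasurable
    (Real.pi / 2) (.of_forall fun _ => Real.abs_arctan_le _)

lemma ae_eq_of_le_of_integral_arctan_le {q g : Ω → ℝ} (hq : AEMeasurable q P)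
    (hg : AEMeasurable g P) (hle : ∀ ω, q ω ≤ g ω)
    (hint : ∫ ω, Real.arctan (g ω) ∂P ≤ ∫ ω, Real.arctan (q ω) ∂P) : q =ᵐ[P] g := by
  have hmono : ∀ ω, Real.arctan (q ω) ≤ Real.arctan (g ω) :=
    fun ω => Real.arctan_strictMono.monotone (hle ω)
  have hdiff : (fun ω => Real.arctan (g ω) - Real.arctan (q ω)) =ᵐ[P] 0 := by
    refine (integral_eq_zero_iff_of_nonneg (fun ω => sub_nonneg.2 (hmono ω))
      ((integrable_arctan_comp hg).sub (integrable_arctan_comp hq))).1 ?_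
    rw [integral_sub (integrable_arctan_comp hg) (integrable_arctan_comp hq)]
    exact le_antisymm (sub_nonpos.2 hint) (sub_nonneg.2
      (integral_mono (integrable_arctan_comp hq) (integrable_arctan_comp hg) hmono))
  filter_upwards [hdiff] with ω hω
  exact Real.arctan_injective (sub_eq_zero.1 hω).symm

lemma exists_seq_ae_iInf_le {A : Set ι} (hA : A.Nonempty) {F : ι → Ω → ℝ}
    (hF : ∀ i ∈ A, Measurable (F i)) {L : Ω → ℝ} (hL : ∀ i ∈ A, ∀ ω, L ω ≤ F i ω) :
    ∃ w : ℕ → ι, (∀ n, w n ∈ A) ∧ ∀ i ∈ A, ∀ᵐ ω ∂P, ⨅ n, F (w n) ω ≤ F i ω := by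
  set V : Set (ℕ → ι) := {v | ∀ n, v n ∈ A}
  have hbdd (v : ℕ → ι) (hv : v ∈ V) (ω : Ω) : BddBelow (range fun n => F (v n) ω) :=
    ⟨L ω, by rintro _ ⟨n, rfl⟩; exact hL _ (hv n) ω⟩
  have hmeas (v : ℕ → ι) (hv : v ∈ V) : Measurable fun ω => ⨅ n, F (v n) ω :=
    .iInf fun n => hF _ (hv n)
  set Φ : (ℕ → ι) → ℝ := fun v => ∫ ω, Real.arctan (⨅ n, F (v n) ω) ∂P
  have hΦbdd : BddBelow (Φ '' V) := by
    refine ⟨-(Real.pi / 2 * P.real univ), ?_⟩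
    rintro _ ⟨v, -, rfl⟩
    exact neg_le_of_abs_le (norm_integral_le_of_norm_le_const (μ := P)
      (f := fun ω => Real.arctan (⨅ n, F (v n) ω)) (.of_forall fun _ => Real.abs_arctan_le _))
  obtain ⟨i₀, hi₀⟩ := hA
  obtain ⟨c, -, hc, hcV⟩ := exists_seq_tendsto_sInf
    ⟨_, mem_image_of_mem Φ (show (fun _ => i₀) ∈ V from fun _ => hi₀)⟩ hΦbdd
  choose v hvV hv using hcV
  -- Interleaving all the `v k` gives a family at least as good as each of them.
  set w : ℕ → ι := fun p => v p.unpair.1 p.unpair.2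
  have hwV : w ∈ V := fun p => hvV _ _
  have hΦw : Φ w ≤ sInf (Φ '' V) := by
    refine ge_of_tendsto' hc fun k => hv k ▸ integral_mono
      (integrable_arctan_comp (hmeas w hwV).aemeasurable)
      (integrable_arctan_comp (hmeas _ (hvV k)).aemeasurable) fun ω => ?_
    refine Real.arctan_strictMono.monotone (le_ciInf fun n => ?_)
    simpa [w] using ciInf_le (hbdd w hwV ω) (Nat.pair k n)
  refine ⟨w, hwV, fun i hi => ?_⟩
  set w' : ℕ → ι := fun n => Nat.casesOn n i w
  have hw'V : w' ∈ V := by rintro (_ | n); exacts [hi, hwV n]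
  have heq : (fun ω => ⨅ n, F (w' n) ω) =ᵐ[P] fun ω => ⨅ n, F (w n) ω :=
    ae_eq_of_le_of_integral_arctan_le (hmeas w' hw'V).aemeasurable (hmeas w hwV).aemeasurable
      (fun ω => le_ciInf fun n => ciInf_le (hbdd w' hw'V ω) (n + 1))
      (hΦw.trans (csInf_le hΦbdd (mem_image_of_mem Φ hw'V)))
  filter_upwards [heq] with ω hω
  exact hω ▸ ciInf_le (hbdd w' hw'V ω) 0

theorem exists_isEssInfFam (hm : m ≤ m0) {A : Set ι} (hA : A.Nonempty)
    {f : ι → Ω → ℝ} (hf : ∀ i ∈ A, Measurable[m] (f i)) {L : Ω → ℝ} (hL : Measurable[m] L)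
    (hLf : ∀ i ∈ A, L ≤ᵐ[P] f i) : ∃ g, Measurable[m] g ∧ IsEssInfFam P A f g := by
  set F : ι → Ω → ℝ := fun i ω => max (f i ω) (L ω)
  have hFm (i : ι) (hi : i ∈ A) : Measurable[m] (F i) := (hf i hi).max hL
  have hFf (i : ι) (hi : i ∈ A) : F i =ᵐ[P] f i :=
    (hLf i hi).mono fun ω hω => max_eq_left hω
  obtain ⟨w, hwA, hw⟩ := exists_seq_ae_iInf_le (P := P) hA
    (fun i hi => (hFm i hi).mono hm le_rfl) fun i _ ω => le_max_right (f i ω) (L ω)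
  have hgm : Measurable[m] fun ω => ⨅ n, F (w n) ω := .iInf fun n => hFm _ (hwA n)
  refine ⟨_, hgm, hgm.mono hm le_rfl, fun i hi => EventuallyLE.trans (hw i hi) (hFf i hi).le,
    fun h _ hh => ?_⟩
  filter_upwards [ae_all_iff.2 fun n => hh _ (hwA n)] with ω hω
  exact le_ciInf fun n => (hω n).trans (le_max_left _ _)

end EssInf

section CondExp

lemma abs_condExp_ae_le_condExp_of_abs_le {f Λ : Ω → ℝ}
    (hΛ : Integrable Λ P) (hfΛ : |f| ≤ᵐ[P] Λ) : |P[f|m]| ≤ᵐ[P] P[Λ|m] := by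
  refine (abs_condExp_ae_le_condExp_abs f).trans ?_
  by_cases hf : Integrable |f| P
  · exact condExp_mono hf hΛ hfΛ
  · rw [condExp_of_not_integrable hf]
    exact condExp_nonneg (hfΛ.mono fun ω h => (abs_nonneg _).trans h)

variable [IsFiniteMeasure P]

lemma exists_isEssInfFam_condExp (hm : m ≤ m0) {Λ : Ω → ℝ}
    (hΛ : Integrable Λ P) {A : Set ι} (hA : A.Nonempty) {X : ι → Ω → ℝ}
    (hXΛ : ∀ i ∈ A, |X i| ≤ᵐ[P] Λ) :
    ∃ g, StronglyMeasurable[m] g ∧ IsEssInfFam P A (fun i => P[X i|m]) g := by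
  obtain ⟨g, hgm, hg⟩ := exists_isEssInfFam hm hA
    (fun i _ => stronglyMeasurable_condExp.measurable)
    (stronglyMeasurable_condExp (μ := P) (f := Λ)).measurable.neg
    fun i hi => (abs_condExp_ae_le_condExp_of_abs_le hΛ (hXΛ i hi)).mono
      fun ω h => neg_le_of_abs_le h
  exact ⟨g, hgm.stronglyMeasurable, hg⟩

lemma condExp_le_of_isEssInfFam (hmm' : m ≤ m') (hm' : m' ≤ m0)
    {A A' : Set ι} (hAA' : A ⊆ A') {X : ι → Ω → ℝ} {g g' : Ω → ℝ}
    (hg : IsEssInfFam P A (fun i => P[X i|m]) g)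
    (hg' : IsEssInfFam P A' (fun i => P[X i|m']) g') (hg'int : Integrable g' P) :
    P[g'|m] ≤ᵐ[P] g :=
  hg.2.2 _ (stronglyMeasurable_condExp.mono (hmm'.trans hm')).measurable fun i hi =>
    (condExp_mono hg'int integrable_condExp (hg'.2.1 i (hAA' hi))).trans
      (condExp_condExp_of_le hmm' hm').le

end CondExp

theorem _root_.MeasureTheory.UniformIntegrable.of_ae_norm_le {β γ : Type*}
    [NormedAddCommGroup β] [NormedAddCommGroup γ] {p : ℝ≥0∞} {f : ι → Ω → β} {h : ι → Ω → γ}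
    (hh : UniformIntegrable h p P) (hf : ∀ i, AEStronglyMeasurable (f i) P)
    (hfh : ∀ i, ∀ᵐ ω ∂P, ‖f i ω‖ ≤ ‖h i ω‖) : UniformIntegrable f p P := by
  obtain ⟨-, hunif, C, hC⟩ := hh
  refine ⟨hf, fun ε hε => ?_, C, fun i => (eLpNorm_mono_ae (hfh i)).trans (hC i)⟩
  obtain ⟨δ, hδ, hδ'⟩ := hunif hε
  refine ⟨δ, hδ, fun i s hs hsδ => (eLpNorm_mono_ae ?_).trans (hδ' i s hs hsδ)⟩
  filter_upwards [hfh i] with ω hω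
  by_cases hωs : ω ∈ s <;> simp [hωs, hω]

lemma tendsto_integral_abs_sub_of_tendsto_eLpNorm_one {κ : Type*} {l : Filter κ}
    {f : κ → Ω → ℝ} {h : Ω → ℝ} (hfh : ∀ k, AEStronglyMeasurable (f k - h) P)
    (hlim : Tendsto (fun k => eLpNorm (f k - h) 1 P) l (𝓝 0)) :
    Tendsto (fun k => ∫ ω, |f k ω - h ω| ∂P) l (𝓝 0) := by
  have hint_eq (k : κ) : ∫ ω, |f k ω - h ω| ∂P = (eLpNorm (f k - h) 1 P).toReal := by
    rw [eLpNorm_one_eq_lintegral_enorm, ← integral_norm_eq_lintegral_enorm (hfh k)]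
    rfl
  simpa only [hint_eq, ENNReal.toReal_zero, Function.comp_def] using
    (ENNReal.tendsto_toReal ENNReal.zero_ne_top).comp hlim

theorem _root_.MeasureTheory.Supermartingale.exists_ae_tendsto_of_uniformIntegrable
    [IsFiniteMeasure P] {ℱ : Filtration ℕ m0} {g : ℕ → Ω → ℝ} (hg : Supermartingale g ℱ P)
    (hUI : UniformIntegrable g 1 P) :
    ∃ G : Ω → ℝ, Measurable G ∧ ∀ᵐ ω ∂P, Tendsto (fun k => g k ω) atTop (𝓝 (G ω)) := by
  have hUIneg : UniformIntegrable (-g) 1 P :=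
    hUI.of_ae_norm_le (fun k => (hUI.1 k).neg) fun k => .of_forall fun _ => (norm_neg _).le
  refine ⟨-(ℱ.limitProcess (-g) P), Filtration.stronglyMeasurable_limit_process'.measurable.neg, ?_⟩
  filter_upwards [hg.neg.ae_tendsto_limitProcess_of_uniformIntegrable hUIneg] with ω h
  simpa using h.neg

section Convergence

variable [IsFiniteMeasure P] {ℱ : Filtration ℕ m0} {A : ℕ → Set ι} {X : ι → Ω → ℝ}
  {g : ℕ → Ω → ℝ} {glim : Ω → ℝ}

lemma ae_eq_of_tendsto_isEssInfFam (hA : Monotone A)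
    (hg : ∀ k, IsEssInfFam P (A k) (fun i => P[X i|ℱ k]) (g k))
    (hglimm : StronglyMeasurable[⨆ k, ℱ k] glim) (hglimint : Integrable glim P)
    (hglim : IsEssInfFam P (⋃ k, A k) (fun i => P[X i|⨆ k, ℱ k]) glim) {G : Ω → ℝ}
    (hGm : Measurable G) (hG : ∀ᵐ ω ∂P, Tendsto (fun k => g k ω) atTop (𝓝 (G ω))) :
    G =ᵐ[P] glim := by
  have hsup_le : ⨆ k, ℱ k ≤ m0 := iSup_le ℱ.le
  have hGle : G ≤ᵐ[P] glim := hglim.2.2 G hGm fun i hi => by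
    obtain ⟨j, hj⟩ := mem_iUnion.1 hi
    have hgX : ∀ᵐ ω ∂P, ∀ k, j ≤ k → g k ω ≤ P[X i|ℱ k] ω :=
      ae_all_iff.2 fun k => eventually_imp_distrib_left.2 fun hjk => (hg k).2.1 i (hA hjk hj)
    filter_upwards [hG, tendsto_ae_condExp (X i), hgX] with ω hGω hXω hgXω
    exact le_of_tendsto_of_tendsto hGω hXω (eventually_atTop.2 ⟨j, hgXω⟩)
  have hleG : glim ≤ᵐ[P] G := by
    have hup : ∀ᵐ ω ∂P, ∀ k, P[glim|ℱ k] ω ≤ g k ω := ae_all_iff.2 fun k =>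
      condExp_le_of_isEssInfFam (le_iSup ℱ k) hsup_le (subset_iUnion A k) (hg k) hglim hglimint
    have hlevy := tendsto_ae_condExp (μ := P) (ℱ := ℱ) glim
    rw [condExp_of_stronglyMeasurable hsup_le hglimm hglimint] at hlevy
    filter_upwards [hup, hlevy, hG] with ω hupω hlevyω hGω
    exact le_of_tendsto_of_tendsto' hlevyω hGω hupω
  exact hGle.antisymm hleG

theorem tendsto_isEssInfFam_condExp {Λ : Ω → ℝ} (hΛ : Integrable Λ P) (hA : Monotone A)
    (hA0 : (A 0).Nonempty) (hXΛ : ∀ i ∈ ⋃ k, A k, |X i| ≤ᵐ[P] Λ) (hgm : StronglyAdapted ℱ g)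
    (hg : ∀ k, IsEssInfFam P (A k) (fun i => P[X i|ℱ k]) (g k))
    (hglimm : StronglyMeasurable[⨆ k, ℱ k] glim)
    (hglim : IsEssInfFam P (⋃ k, A k) (fun i => P[X i|⨆ k, ℱ k]) glim) :
    (∀ᵐ ω ∂P, Tendsto (fun k => g k ω) atTop (𝓝 (glim ω))) ∧
      Tendsto (fun k => ∫ ω, |g k ω - glim ω| ∂P) atTop (𝓝 0) := by
  have hsup_le : ⨆ k, ℱ k ≤ m0 := iSup_le ℱ.le
  have hbound (k : ℕ) : |g k| ≤ᵐ[P] P[Λ|ℱ k] :=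
    (hg k).abs_ae_le (hA0.mono (hA k.zero_le))
      (stronglyMeasurable_condExp.mono (ℱ.le k)).measurable
      fun i hi => abs_condExp_ae_le_condExp_of_abs_le hΛ (hXΛ i (mem_iUnion_of_mem k hi))
  have hgint (k : ℕ) : Integrable (g k) P :=
    integrable_condExp.mono' ((hgm k).mono (ℱ.le k)).aestronglyMeasurable (hbound k)
  have hglimint : Integrable glim P :=
    integrable_condExp.mono' (hglimm.mono hsup_le).aestronglyMeasurable
      (hglim.abs_ae_le (hA0.mono (subset_iUnion A 0))
        (stronglyMeasurable_condExp.mono hsup_le).measurable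
        fun i hi => abs_condExp_ae_le_condExp_of_abs_le hΛ (hXΛ i hi))
  have hsuper : Supermartingale g ℱ P := supermartingale_nat hgm hgint fun k =>
    condExp_le_of_isEssInfFam (ℱ.mono k.le_succ) (ℱ.le _) (hA k.le_succ) (hg k) (hg (k + 1))
      (hgint _)
  have hUI : UniformIntegrable g 1 P :=
    hΛ.uniformIntegrable_condExp_filtration.of_ae_norm_le
      (fun k => (hgint k).aestronglyMeasurable)
      fun k => (hbound k).mono fun _ h => h.trans (le_abs_self _)
  obtain ⟨G, hGm, hG⟩ := hsuper.exists_ae_tendsto_of_uniformIntegrable hUI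
  have hlim : ∀ᵐ ω ∂P, Tendsto (fun k => g k ω) atTop (𝓝 (glim ω)) := by
    filter_upwards [hG, ae_eq_of_tendsto_isEssInfFam hA hg hglimm hglimint hglim hGm hG]
      with ω hGω heq
    rwa [← heq]
  exact ⟨hlim, tendsto_integral_abs_sub_of_tendsto_eLpNorm_one
    (fun k => ((hgint k).sub hglimint).aestronglyMeasurable)
    (tendsto_Lp_finite_of_tendsto_ae le_rfl ENNReal.one_ne_top
      (fun k => (hgint k).aestronglyMeasurable) (memLp_one_iff_integrable.2 hglimint)
      hUI.unifIntegrable hlim)⟩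

end Convergence

end General

section Observations

variable {U : Type*} [MeasurableSpace U] {Y m0 : MeasurableSpace Ω} {T S : Ω → Ω}

lemma measurable_iter (hT : Measurable T) (hS : Measurable S) :
    ∀ k : ℤ, Measurable (iter T S k)
  | Int.ofNat n => hT.iterate n
  | Int.negSucc n => hS.iterate (n + 1)

lemma obsField_le (hT : Measurable T) (hS : Measurable S) (hY : Y ≤ m0) (a b : ℤ) :
    obsField T S Y a b ≤ m0 :=
  iSup₂_le fun k _ => ((measurable_iter hT hS k).mono le_rfl hY).comap_le

lemma obsField_le_obsField_of_le {a a' : ℤ} (h : a ≤ a') (b : ℤ) :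
    obsField T S Y a' b ≤ obsField T S Y a b :=
  biSup_mono (Icc_subset_Icc_left h)

def pastObsFiltration (hT : Measurable T) (hS : Measurable S) (hY : Y ≤ m0) :
    Filtration ℕ m0 where
  seq k := obsField T S Y (-k) 0
  mono' _ _ hij := obsField_le_obsField_of_le (by omega) 0
  le' k := obsField_le hT hS hY _ 0

lemma iSup_pastObsFiltration (hT : Measurable T) (hS : Measurable S) (hY : Y ≤ m0) :
    ⨆ k, pastObsFiltration hT hS hY k = obsFieldLE T S Y 0 := by
  refine le_antisymm (iSup_le fun k => biSup_mono fun j hj => hj.2) (iSup₂_le fun j hj => ?_)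
  refine le_trans ?_ (le_iSup _ (-j).toNat)
  exact le_iSup₂ (f := fun k (_ : k ∈ Icc (-((-j).toNat : ℤ)) 0) =>
    MeasurableSpace.comap (iter T S k) Y) j ⟨by omega, hj⟩

lemma monotone_Umn_neg : Monotone fun k : ℕ => (Umn T S Y (-k) 0 : Set (Ω → U)) :=
  fun _ _ hij _ hv => hv.mono (obsField_le_obsField_of_le (by omega) 0) le_rfl

lemma Umn_nonempty [Nonempty U] (a b : ℤ) : (Umn T S Y a b : Set (Ω → U)).Nonempty :=
  ⟨fun _ => Classical.arbitrary U, measurable_const⟩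

lemma Un_zero_eq_iUnion_Umn : (Un T S Y 0 : Set (Ω → U)) = ⋃ k : ℕ, Umn T S Y (-k) 0 := by
  ext v
  simp only [Un, mem_iUnion, mem_Iic]
  constructor
  · rintro ⟨a, ha, hv⟩
    exact ⟨(-a).toNat, hv.mono (obsField_le_obsField_of_le (by omega) 0) le_rfl⟩
  · rintro ⟨k, hv⟩
    exact ⟨-k, by omega, hv⟩

end Observations

theorem statement16_general
    {Ω U : Type*} [m0 : MeasurableSpace Ω] [MeasurableSpace U] [Nonempty U]
    (P : Measure Ω) [IsProbabilityMeasure P]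
    (T S : Ω → Ω) (hT : Ergodic T P) (hS : MeasurePreserving S P P)
    (ℓ : U → Ω → ℝ)
    (Λ : Ω → ℝ) (hΛ : Integrable Λ P) (hdom : ∀ u ω, |ℓ u ω| ≤ Λ ω)
    (Y : MeasurableSpace Ω) (hY : Y ≤ m0)
    :
    ∃ (g : ℕ → Ω → ℝ) (glim : Ω → ℝ),
      (∀ k : ℕ, IsEssInfFam P (Umn T S Y (-(k : ℤ)) 0 : Set (Ω → U))
        (fun v => P[lossAt T S ℓ 0 v | obsField T S Y (-(k : ℤ)) 0]) (g k)) ∧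
      IsEssInfFam P (Un T S Y 0 : Set (Ω → U))
        (fun v => P[lossAt T S ℓ 0 v | obsFieldLE T S Y 0]) glim ∧
      (∀ᵐ ω ∂P, Tendsto (fun k : ℕ => g k ω) atTop (𝓝 (glim ω))) ∧
      Tendsto (fun k : ℕ => ∫ ω, |g k ω - glim ω| ∂P) atTop (𝓝 0) := by
  -- `Y` is the most recent `MeasurableSpace Ω` instance here: measurability for `m0` has to be
  -- destructured from the hypotheses, lemmas would elaborate it for `Y`.
  obtain ⟨⟨hTm, -⟩, -⟩ := hT
  obtain ⟨hSm, -⟩ := hS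
  set ℱ := pastObsFiltration hTm hSm hY
  have hloss (v : Ω → U) : ∀ ω, |lossAt T S ℓ 0 v ω| ≤ Λ ω := fun ω => hdom (v ω) ω
  choose g hgm hg using fun k : ℕ => exists_isEssInfFam_condExp (ℱ.le k) hΛ
    (Umn_nonempty _ 0) fun v _ => .of_forall (hloss v)
  obtain ⟨glim, hglimm, hglim⟩ := exists_isEssInfFam_condExp (iSup_le ℱ.le) hΛ
    ((Umn_nonempty 0 0).mono (subset_iUnion (fun k : ℕ => (Umn T S Y (-k) 0 : Set (Ω → U))) 0))
    fun v _ => .of_forall (hloss v)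
  obtain ⟨hae, hL1⟩ := tendsto_isEssInfFam_condExp hΛ monotone_Umn_neg (Umn_nonempty 0 0)
    (fun v _ => .of_forall (hloss v)) hgm hg hglimm hglim
  refine ⟨g, glim, hg, ?_, hae, hL1⟩
  rwa [Un_zero_eq_iUnion_Umn, ← iSup_pastObsFiltration hTm hSm hY]

/-- Lemma 4.4: the essential infima
`ess inf_{u ∈ 𝕌_{-k,0}} E[ℓ₀(u)|𝒴_{-k,0}]` converge, a.s. and in `L¹`, to
`ess inf_{u ∈ 𝕌₀} E[ℓ₀(u)|𝒴_{-∞,0}]` as `k → ∞`. -/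
theorem statement16
    {Ω U : Type*} [m0 : MeasurableSpace Ω] [MeasurableSpace U] [Nonempty U]
    (P : Measure Ω) [IsProbabilityMeasure P]
    (T S : Ω → Ω) (hT : Ergodic T P) (hS : MeasurePreserving S P P)
    (hST : Function.LeftInverse S T) (hTS : Function.RightInverse S T)
    (ℓ : U → Ω → ℝ) (hℓ : Measurable fun p : U × Ω => ℓ p.1 p.2)
    (Λ : Ω → ℝ) (hΛ : Integrable Λ P) (hdom : ∀ u ω, |ℓ u ω| ≤ Λ ω)
    (Y : MeasurableSpace Ω) (hY : Y ≤ m0)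
    :
    ∃ (g : ℕ → Ω → ℝ) (glim : Ω → ℝ),
      (∀ k : ℕ, IsEssInfFam P (Umn T S Y (-(k : ℤ)) 0 : Set (Ω → U))
        (fun v => P[lossAt T S ℓ 0 v | obsField T S Y (-(k : ℤ)) 0]) (g k)) ∧
      IsEssInfFam P (Un T S Y 0 : Set (Ω → U))
        (fun v => P[lossAt T S ℓ 0 v | obsFieldLE T S Y 0]) glim ∧
      (∀ᵐ ω ∂P, Tendsto (fun k : ℕ => g k ω) atTop (𝓝 (glim ω))) ∧
      Tendsto (fun k : ℕ => ∫ ω, |g k ω - glim ω| ∂P) atTop (𝓝 0) :=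
  statement16_general (m0 := m0) P T S hT hS ℓ Λ hΛ hdom Y hY

end ErgodicDecisions
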